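/- arXiv:1002.0372 — 2 statements merged into one kernel-verified Lean document; each statement's English description precedes it below -/
import Mathlib

section
/- For every complex number z with |z| < 1, the maximum over all complex ζ with |ζ| = 1 of Re(1/(z − ζ)) equals (1 − Re(z))/(1 − |z|²); that is, Re(1/(z − ζ)) ≤ (1 − Re z)/(1 − |z|²) for all ζ on the unit circle, and this bound is attained for some ζ with |ζ| = 1. -/
/-!
For `|z| ≠ 1` the map `ζ ↦ 1 / (z - ζ)` sends the unit circle onto the circle of centre
`-z̄ / (1 - |z|²)` and radius `1 / |1 - |z|²|`: since `|ζ| = 1` we have `|1 - z̄ ζ| = |z - ζ|`, and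
`1 / (z - ζ) + z̄ / (1 - |z|²) = (1 - z̄ ζ) / ((1 - |z|²) (z - ζ))`. For `|z| < 1` the largest real
part on this circle is centre plus radius, `(1 - Re z) / (1 - |z|²)`, attained at
`ζ = (z - 1) / (1 - z̄)`.
-/

open Complex

open ComplexConjugate

namespace Complex

theorem norm_one_sub_conj_mul_eq_norm_sub {z ζ : ℂ} (hζ : ‖ζ‖ = 1) :
    ‖1 - conj z * ζ‖ = ‖z - ζ‖ := by
  have h : 1 - conj z * ζ = ζ * conj (ζ - z) := by
    rw [map_sub, mul_sub, mul_conj, normSq_eq_norm_sq, hζ]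
    push_cast
    ring
  rw [h, norm_mul, norm_conj, hζ, one_mul, norm_sub_rev]

theorem one_div_sub_add_conj_div {z ζ : ℂ} (hzζ : z ≠ ζ) (hz : ‖z‖ ≠ 1) :
    1 / (z - ζ) + conj z / (1 - ‖z‖ ^ 2 : ℝ) =
      (1 - conj z * ζ) / ((1 - ‖z‖ ^ 2 : ℝ) * (z - ζ)) := by
  have hsub : z - ζ ≠ 0 := sub_ne_zero.mpr hzζ
  have hnorm : ((1 - ‖z‖ ^ 2 : ℝ) : ℂ) ≠ 0 := ofReal_ne_zero.mpr <| sub_ne_zero.mpr fun h =>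
    hz <| (pow_eq_one_iff_of_nonneg (norm_nonneg z) two_ne_zero).mp h.symm
  rw [div_add_div _ _ hsub hnorm, mul_comm (z - ζ)]
  push_cast
  rw [← mul_conj']
  ring

theorem one_div_sub_mem_sphere {z ζ : ℂ} (hζ : ‖ζ‖ = 1) (hz : ‖z‖ ≠ 1) :
    1 / (z - ζ) ∈ Metric.sphere (-conj z / (1 - ‖z‖ ^ 2 : ℝ)) |1 - ‖z‖ ^ 2|⁻¹ := by
  have hzζ : z ≠ ζ := by rintro rfl; exact hz hζ
  have hsub : ‖z - ζ‖ ≠ 0 := norm_ne_zero_iff.mpr (sub_ne_zero.mpr hzζ)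
  rw [mem_sphere_iff_norm, sub_eq_add_neg, neg_div, neg_neg, one_div_sub_add_conj_div hzζ hz,
    norm_div, norm_mul, norm_one_sub_conj_mul_eq_norm_sub hζ, norm_real, Real.norm_eq_abs]
  field_simp

theorem norm_sub_one_div_one_sub_conj {z : ℂ} (hz : z ≠ 1) : ‖(z - 1) / (1 - conj z)‖ = 1 := by
  have h : 1 - conj z = conj (-(z - 1)) := by simp
  rw [h, norm_div, norm_conj, norm_neg, div_self (norm_ne_zero_iff.mpr (sub_ne_zero.mpr hz))]

theorem one_div_sub_div_one_sub_conj {z : ℂ} (hz : z ≠ 1) :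
    1 / (z - (z - 1) / (1 - conj z)) = (1 - conj z) / (1 - ‖z‖ ^ 2 : ℝ) := by
  have hconj : 1 - conj z ≠ 0 := sub_ne_zero.mpr fun h => hz (by simpa using congrArg conj h.symm)
  have h : z - (z - 1) / (1 - conj z) = (1 - ‖z‖ ^ 2 : ℝ) / (1 - conj z) := by
    rw [sub_div' hconj]
    push_cast
    rw [← mul_conj']
    ring
  rw [h, one_div_div]

end Complex

/-- For `|z| < 1`, the maximum over `|ζ| = 1` of `Re(1/(z − ζ))` equals
`(1 − Re z)/(1 − |z|²)`. -/
theorem max_re_reciprocal_on_circle (z : ℂ) (hz : ‖z‖ < 1) :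
    IsGreatest {r : ℝ | ∃ ζ : ℂ, ‖ζ‖ = 1 ∧ r = (1 / (z - ζ)).re}
      ((1 - z.re) / (1 - ‖z‖ ^ 2)) := by
  have hz1 : z ≠ 1 := by rintro rfl; simp at hz
  have hpos : 0 < 1 - ‖z‖ ^ 2 := by nlinarith [norm_nonneg z]
  refine ⟨⟨_, norm_sub_one_div_one_sub_conj hz1, ?_⟩, ?_⟩
  · rw [one_div_sub_div_one_sub_conj hz1, div_ofReal_re, sub_re, one_re, conj_re]
  rintro r ⟨ζ, hζ, rfl⟩
  set c : ℂ := -conj z / (1 - ‖z‖ ^ 2 : ℝ)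
  have hw := one_div_sub_mem_sphere hζ hz.ne
  rw [mem_sphere_iff_norm, abs_of_pos hpos] at hw
  calc (1 / (z - ζ)).re = c.re + (1 / (z - ζ) - c).re := by rw [sub_re, add_sub_cancel]
    _ ≤ c.re + (1 - ‖z‖ ^ 2)⁻¹ := by gcongr; exact hw ▸ re_le_norm _
    _ = (1 - z.re) / (1 - ‖z‖ ^ 2) := by
      rw [div_ofReal_re, neg_re, conj_re]
      ring
end

section
/- There is an absolute constant C > 0 such that for every natural number N ≥ 1 and every complex number δ with |δ| ≤ N/2, one has | N(1 − |1 − δ/N|) − Re(δ) + (Im δ)²/(2N) | ≤ C·|δ|³/N². -/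
open Complex

/-!
Write `z = x + iy`. The approximation `a = 1 - x + y²/2` of `s = |1 - z|` satisfies
`a² - s² = y⁴/4 - x y² = O(|z|³)`, while `a + s ≥ 1` for `|z| ≤ 1/2`; hence `a - s = O(|z|³)`.
The theorem is this estimate for `z = δ/N`, multiplied by `N`.
-/

theorem abs_sub_le_abs_sq_sub_sq {a b : ℝ} (h : 1 ≤ a + b) : |a - b| ≤ |a ^ 2 - b ^ 2| := by
  rw [sq_sub_sq, abs_mul, abs_of_pos (by linarith : 0 < a + b)]
  exact le_mul_of_one_le_left (abs_nonneg _) h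

namespace Complex

theorem sq_norm_one_sub (z : ℂ) : ‖1 - z‖ ^ 2 = 1 - 2 * z.re + z.re ^ 2 + z.im ^ 2 := by
  rw [Complex.sq_norm, normSq_apply]
  simp only [sub_re, sub_im, one_re, one_im]
  ring

theorem abs_one_sub_norm_one_sub_sub_re_add_im_sq_le {z : ℂ} (hz : ‖z‖ ≤ 1 / 2) :
    |1 - ‖1 - z‖ - z.re + z.im ^ 2 / 2| ≤ 2 * ‖z‖ ^ 3 := by
  set x := z.re
  set y := z.im
  set r := ‖z‖
  set s := ‖1 - z‖
  have hr : 0 ≤ r := norm_nonneg z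
  have hx : |x| ≤ r := abs_re_le_norm z
  have hy : y ^ 2 ≤ r ^ 2 := by simpa using pow_le_pow_left₀ (abs_nonneg y) (abs_im_le_norm z) 2
  have hs : 1 / 2 ≤ s := by
    have := norm_sub_norm_le (1 : ℂ) z
    rw [norm_one] at this
    linarith
  have hsum : 1 ≤ (1 - x + y ^ 2 / 2) + s := by linarith [(abs_le.mp hx).2, sq_nonneg y]
  have hsq : (1 - x + y ^ 2 / 2) ^ 2 - s ^ 2 = y ^ 4 / 4 - x * y ^ 2 := by
    linear_combination -sq_norm_one_sub z
  have hxy : |x * y ^ 2| ≤ r ^ 3 := by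
    rw [abs_mul, abs_of_nonneg (sq_nonneg y)]
    calc |x| * y ^ 2 ≤ r * r ^ 2 := mul_le_mul hx hy (sq_nonneg y) hr
      _ = r ^ 3 := by ring
  have hy4 : y ^ 4 / 4 ≤ r ^ 3 := by nlinarith [pow_le_pow_left₀ (sq_nonneg y) hy 2]
  calc |1 - s - x + y ^ 2 / 2| = |(1 - x + y ^ 2 / 2) - s| := by ring_nf
    _ ≤ |y ^ 4 / 4 - x * y ^ 2| := hsq ▸ abs_sub_le_abs_sq_sub_sq hsum
    _ ≤ |y ^ 4 / 4| + |x * y ^ 2| := abs_sub _ _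
    _ ≤ 2 * r ^ 3 := by rw [abs_of_nonneg (by positivity : (0 : ℝ) ≤ y ^ 4 / 4)]; linarith

theorem abs_mul_one_sub_norm_one_sub_div_sub_re_add_im_sq_le {t : ℝ} (ht : 0 < t) {δ : ℂ}
    (hδ : ‖δ‖ ≤ t / 2) :
    |t * (1 - ‖1 - δ / t‖) - δ.re + δ.im ^ 2 / (2 * t)| ≤ 2 * ‖δ‖ ^ 3 / t ^ 2 := by
  have hnorm : ‖δ / t‖ = ‖δ‖ / t := by rw [norm_div, norm_real, Real.norm_of_nonneg ht.le]
  have hz : ‖δ / t‖ ≤ 1 / 2 := by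
    rw [hnorm, div_le_iff₀ ht]
    linarith
  have key := abs_one_sub_norm_one_sub_sub_re_add_im_sq_le hz
  rw [div_ofReal_re, div_ofReal_im, hnorm] at key
  calc |t * (1 - ‖1 - δ / t‖) - δ.re + δ.im ^ 2 / (2 * t)|
      = |t * (1 - ‖1 - δ / t‖ - δ.re / t + (δ.im / t) ^ 2 / 2)| := by
        congr 1
        field_simp
    _ = t * |1 - ‖1 - δ / t‖ - δ.re / t + (δ.im / t) ^ 2 / 2| := by rw [abs_mul, abs_of_pos ht]
    _ ≤ t * (2 * (‖δ‖ / t) ^ 3) := mul_le_mul_of_nonneg_left key ht.le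
    _ = 2 * ‖δ‖ ^ 3 / t ^ 2 := by field_simp

end Complex

/-- There is an absolute constant `C > 0` such that for every `N ≥ 1` and every complex `δ`
with `|δ| ≤ N/2`, `| N(1 − |1 − δ/N|) − Re(δ) + (Im δ)²/(2N) | ≤ C·|δ|³/N²`. -/
theorem rescaled_distance_expansion :
    ∃ C : ℝ, 0 < C ∧ ∀ N : ℕ, 1 ≤ N → ∀ δ : ℂ, ‖δ‖ ≤ N / 2 →
      |(N : ℝ) * (1 - ‖1 - δ / N‖) - δ.re + δ.im ^ 2 / (2 * N)|
        ≤ C * ‖δ‖ ^ 3 / N ^ 2 := by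
  refine ⟨2, two_pos, fun N hN δ hδ => ?_⟩
  simpa using abs_mul_one_sub_norm_one_sub_div_sub_re_add_im_sq_le (Nat.cast_pos.mpr hN) hδ
end
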